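/- If the multiverse is directed downward from any structure via generic extension and every structure has an infinitely generic extension, then any two infinitely generic structures N₁, N₂ with a common extension Q (Q ≤ N₁ and Q ≤ N₂) satisfy the same sentences with parameters in N₁ ∩ N₂. -/

import Mathlib

namespace Robinson

/-- Formulas built from atoms (which may carry parameters), with conjunction,
disjunction, negation and an existential quantifier whose witnesses range over
a fixed type `W` of potential parameters/elements. -/
inductive Frm (atom : Type) (W : Type) : Type
  | atm : atom → Frm atom W
  | and : Frm atom W → Frm atom W → Frm atom W
  | or  : Frm atom W → Frm atom W → Frm atom W
  | not : Frm atom W → Frm atom W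
  | ex  : (W → Frm atom W) → Frm atom W

/-- A multiverse: a preorder of structures, `le Q N` meaning `Q` extends `N`
(`N` is a substructure of `Q`).  `mem a N` says the element `a` belongs to the
domain of `N` (so elements persist to extensions), and atomic sentences with
parameters in `N` are absolute between `N` and its extensions. -/
structure Multiverse (atom : Type) (W : Type) : Type 1 where
  M : Type
  le : M → M → Prop
  le_refl : ∀ N, le N N
  le_trans : ∀ {P Q R}, le P Q → le Q R → le P R
  satAtom : M → atom → Prop
  mem : W → M → Prop
  mem_mono : ∀ {a : W} {N Q : M}, le Q N → mem a N → mem a Q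
  atom_absolute : ∀ {N Q : M} (p : atom), le Q N → (satAtom N p ↔ satAtom Q p)

variable {atom W : Type}

/-- Robinson's infinite forcing relation on the multiverse. -/
def Forces (V : Multiverse atom W) : Frm atom W → V.M → Prop
  | .atm p, N => V.satAtom N p
  | .and φ ψ, N => Forces V φ N ∧ Forces V ψ N
  | .or φ ψ, N => Forces V φ N ∨ Forces V ψ N
  | .not φ, N => ∀ Q : V.M, V.le Q N → ¬ Forces V φ Q
  | .ex f, N => ∃ a : W, V.mem a N ∧ Forces V (f a) N

/-- Tarskian satisfaction. -/
def Sat (V : Multiverse atom W) : Frm atom W → V.M → Prop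
  | .atm p, N => V.satAtom N p
  | .and φ ψ, N => Sat V φ N ∧ Sat V ψ N
  | .or φ ψ, N => Sat V φ N ∨ Sat V ψ N
  | .not φ, N => ¬ Sat V φ N
  | .ex f, N => ∃ a : W, V.mem a N ∧ Sat V (f a) N

/-- `N` is infinitely generic: it forces every sentence or its negation. -/
def Generic (V : Multiverse atom W) (N : V.M) : Prop :=
  ∀ φ : Frm atom W, Forces V φ N ∨ Forces V (Frm.not φ) N

end Robinson

/-!
Forcing is monotone along extensions, and in an infinitely generic structure it agrees with
satisfaction; a generic `N` also forces everything that any extension forces, since otherwise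
it would force the negation.  Hence `N₁` and `N₂` both force exactly what an infinitely
generic common extension `Q'` of `Q` forces, and so satisfy the same sentences.
-/

namespace Robinson

variable {atom W : Type} {V : Multiverse atom W}

theorem Forces.mono {φ : Frm atom W} {N Q : V.M} (hf : Forces V φ N) (h : V.le Q N) :
    Forces V φ Q := by
  induction φ generalizing N Q with
  | atm p => exact (V.atom_absolute p h).mp hf
  | and φ ψ ihφ ihψ => exact ⟨ihφ hf.1 h, ihψ hf.2 h⟩
  | or φ ψ ihφ ihψ => exact hf.imp (ihφ · h) (ihψ · h)
  | not φ _ => exact fun R hR => hf R (V.le_trans hR h)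
  | ex f ih =>
    obtain ⟨a, ha, hfa⟩ := hf
    exact ⟨a, V.mem_mono h ha, ih a hfa h⟩

theorem Generic.forces_iff_sat {N : V.M} (hN : Generic V N) (φ : Frm atom W) :
    Forces V φ N ↔ Sat V φ N := by
  induction φ with
  | atm p => exact Iff.rfl
  | and φ ψ ihφ ihψ => exact and_congr ihφ ihψ
  | or φ ψ ihφ ihψ => exact or_congr ihφ ihψ
  | not φ ih =>
    refine ⟨fun hf hs => hf N (V.le_refl N) (ih.mpr hs), fun hs => ?_⟩
    exact (hN φ).resolve_left (mt ih.mp hs)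
  | ex f ih => exact exists_congr fun a => and_congr_right' (ih a)

theorem Generic.forces_iff_of_le {N Q : V.M} (hN : Generic V N) (h : V.le Q N)
    (φ : Frm atom W) : Forces V φ N ↔ Forces V φ Q :=
  ⟨(·.mono h), fun hf => (hN φ).resolve_right fun hneg => hneg Q h hf⟩

theorem Generic.sat_iff_of_le {N Q : V.M} (hN : Generic V N) (hQ : Generic V Q)
    (h : V.le Q N) (φ : Frm atom W) : Sat V φ N ↔ Sat V φ Q := by
  rw [← hN.forces_iff_sat, ← hQ.forces_iff_sat, hN.forces_iff_of_le h]

/-- Two infinitely generic structures with a common extension satisfy the same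
sentences, assuming density of infinitely generic structures. -/
theorem generic_common_extension_elem_equiv {atom W : Type} (V : Multiverse atom W)
    (hdense : ∀ P : V.M, ∃ Q : V.M, V.le Q P ∧ Generic V Q)
    {N1 N2 Q : V.M} (h1 : Generic V N1) (h2 : Generic V N2)
    (hq1 : V.le Q N1) (hq2 : V.le Q N2) :
    ∀ phi : Frm atom W, Sat V phi N1 ↔ Sat V phi N2 := by
  intro phi
  obtain ⟨Q', hQ', hgQ'⟩ := hdense Q
  exact (h1.sat_iff_of_le hgQ' (V.le_trans hQ' hq1) phi).trans
    (h2.sat_iff_of_le hgQ' (V.le_trans hQ' hq2) phi).symm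

end Robinson
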